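/- Let A be a positive-definite n×n real matrix and q ∈ ℝⁿ with q ≥ 0, q ≠ 0. If v⋆ minimizes v ↦ ⟨v, A⁻¹ v⟩ over {v : v ≥ q} and w⋆ := A⁻¹ v⋆, then ⟨w⋆, q⟩² / ⟨w⋆, A w⋆⟩ = ⟨v⋆, A⁻¹ v⋆⟩, i.e., w⋆ attains the supremum of w ↦ ⟨w,q⟩²/⟨w,Aw⟩ over nonzero nonnegative w. -/

import Mathlib

/-!
The minimiser `v⋆` of the convex quadratic `⟨v, A⁻¹ v⟩` on the orthant `v ≥ q` satisfies the
first-order condition `⟨y - v⋆, w⋆⟩ ≥ 0` for every feasible `y`. Testing it with `y = q` and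
`y = 2 v⋆ - q` gives complementarity `⟨w⋆, q⟩ = ⟨w⋆, v⋆⟩ = ⟨w⋆, A w⋆⟩`, so `w⋆` attains the value
`⟨v⋆, A⁻¹ v⋆⟩`. For any `w ≥ 0`, `0 ≤ ⟨w, q⟩ ≤ ⟨w, v⋆⟩ = ⟨w, A w⋆⟩`, and Cauchy–Schwarz for the
form of `A` bounds the quotient at `w` by `⟨w⋆, A w⋆⟩`.
-/

open Matrix Filter Topology Set

lemma nonneg_of_forall_mem_Ioc_mul_add_mul_sq_nonneg {b c : ℝ}
    (h : ∀ t ∈ Ioc (0 : ℝ) 1, 0 ≤ b * t + c * t ^ 2) : 0 ≤ b := by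
  have hlim : Tendsto (fun t => b + c * t) (𝓝[>] 0) (𝓝 b) := by
    have : Tendsto (fun t => b + c * t) (𝓝 0) (𝓝 (b + c * 0)) :=
      (continuous_const.add (continuous_const.mul continuous_id)).tendsto 0
    simpa using this.mono_left nhdsWithin_le_nhds
  refine ge_of_tendsto hlim ?_
  filter_upwards [Ioc_mem_nhdsGT one_pos] with t ht
  refine nonneg_of_mul_nonneg_left ?_ ht.1
  linarith [h t ht]

namespace Matrix

variable {ι : Type*} [Fintype ι]

lemma IsSymm.dotProduct_mulVec_comm {R : Type*} [CommSemiring R] {B : Matrix ι ι R}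
    (hB : B.IsSymm) (x y : ι → R) : x ⬝ᵥ B *ᵥ y = y ⬝ᵥ B *ᵥ x := by
  rw [dotProduct_mulVec, ← mulVec_transpose, hB.eq, dotProduct_comm]

lemma IsSymm.dotProduct_mulVec_add_smul {R : Type*} [CommRing R] {B : Matrix ι ι R}
    (hB : B.IsSymm) (x d : ι → R) (t : R) :
    (x + t • d) ⬝ᵥ B *ᵥ (x + t • d) =
      x ⬝ᵥ B *ᵥ x + 2 * (d ⬝ᵥ B *ᵥ x) * t + (d ⬝ᵥ B *ᵥ d) * t ^ 2 := by
  simp only [mulVec_add, mulVec_smul, dotProduct_add, add_dotProduct, dotProduct_smul,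
    smul_dotProduct, smul_eq_mul, hB.dotProduct_mulVec_comm x d]
  ring

lemma PosSemidef.sq_dotProduct_mulVec_le {B : Matrix ι ι ℝ} (hB : B.PosSemidef) (x y : ι → ℝ) :
    (x ⬝ᵥ B *ᵥ y) ^ 2 ≤ (x ⬝ᵥ B *ᵥ x) * (y ⬝ᵥ B *ᵥ y) := by
  have hsymm : B.IsSymm := isHermitian_iff_isSymm.mp hB.1
  have hquad : ∀ t : ℝ,
      0 ≤ (y ⬝ᵥ B *ᵥ y) * (t * t) + 2 * (x ⬝ᵥ B *ᵥ y) * t + x ⬝ᵥ B *ᵥ x := fun t => by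
    have := hB.dotProduct_mulVec_nonneg (x + t • y)
    rw [star_trivial, hsymm.dotProduct_mulVec_add_smul, hsymm.dotProduct_mulVec_comm y x] at this
    linarith
  have := discrim_le_zero hquad
  rw [discrim] at this
  nlinarith

lemma IsSymm.dotProduct_mulVec_sub_nonneg_of_isMinOn {B : Matrix ι ι ℝ} (hB : B.IsSymm)
    {s : Set (ι → ℝ)} (hs : Convex ℝ s) {x y : ι → ℝ} (hx : x ∈ s) (hy : y ∈ s)
    (hmin : IsMinOn (fun v => v ⬝ᵥ B *ᵥ v) s x) : 0 ≤ (y - x) ⬝ᵥ B *ᵥ x := by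
  have htwice : 0 ≤ 2 * ((y - x) ⬝ᵥ B *ᵥ x) := by
    refine nonneg_of_forall_mem_Ioc_mul_add_mul_sq_nonneg
      (c := (y - x) ⬝ᵥ B *ᵥ (y - x)) fun t ht => ?_
    have : x ⬝ᵥ B *ᵥ x ≤ (x + t • (y - x)) ⬝ᵥ B *ᵥ (x + t • (y - x)) :=
      hmin (hs.add_smul_sub_mem hx hy (Ioc_subset_Icc_self ht))
    rw [hB.dotProduct_mulVec_add_smul] at this
    linarith
  linarith

lemma IsSymm.dotProduct_mulVec_eq_of_isMinOn_Ici {B : Matrix ι ι ℝ} (hB : B.IsSymm)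
    {q x : ι → ℝ} (hx : q ≤ x) (hmin : IsMinOn (fun v => v ⬝ᵥ B *ᵥ v) (Ici q) x) :
    q ⬝ᵥ B *ᵥ x = x ⬝ᵥ B *ᵥ x := by
  have htoward : 0 ≤ (q - x) ⬝ᵥ B *ᵥ x :=
    hB.dotProduct_mulVec_sub_nonneg_of_isMinOn (convex_Ici q) hx self_mem_Ici hmin
  have hreflect : 0 ≤ (x + (x - q) - x) ⬝ᵥ B *ᵥ x :=
    hB.dotProduct_mulVec_sub_nonneg_of_isMinOn (convex_Ici q) hx
      (le_add_of_le_of_nonneg hx (sub_nonneg.mpr hx)) hmin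
  rw [add_sub_cancel_left] at hreflect
  rw [sub_dotProduct] at htoward hreflect
  linarith

end Matrix

theorem saddle_point_sup_attained_general (n : ℕ) (A : Matrix (Fin n) (Fin n) ℝ)
    (hA : A.PosDef) (q : Fin n → ℝ) (hq : 0 ≤ q)
    (vstar : Fin n → ℝ) (hvs : q ≤ vstar)
    (hmin : IsMinOn (fun v : Fin n → ℝ => v ⬝ᵥ A⁻¹.mulVec v) {v | q ≤ v} vstar)
    (wstar : Fin n → ℝ) (hws : wstar = A⁻¹.mulVec vstar) :
    (wstar ⬝ᵥ q) ^ 2 / (wstar ⬝ᵥ A.mulVec wstar) = vstar ⬝ᵥ A⁻¹.mulVec vstar ∧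
    (∀ w : Fin n → ℝ, 0 ≤ w → w ≠ 0 →
      (w ⬝ᵥ q) ^ 2 / (w ⬝ᵥ A.mulVec w) ≤ (wstar ⬝ᵥ q) ^ 2 / (wstar ⬝ᵥ A.mulVec wstar)) := by
  have hAw : A *ᵥ wstar = vstar := by
    rw [hws, mulVec_mulVec, mul_nonsing_inv A (isUnit_iff_isUnit_det A |>.mp hA.isUnit),
      one_mulVec]
  have hvalue : wstar ⬝ᵥ A *ᵥ wstar = vstar ⬝ᵥ A⁻¹ *ᵥ vstar := by
    rw [hAw, ← hws, dotProduct_comm]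
  have hcompl : wstar ⬝ᵥ q = vstar ⬝ᵥ A⁻¹ *ᵥ vstar := by
    rw [dotProduct_comm, hws]
    exact (isHermitian_iff_isSymm.mp hA.inv.1).dotProduct_mulVec_eq_of_isMinOn_Ici hvs hmin
  rw [hcompl, hvalue, sq, mul_self_div_self, ← hvalue]
  refine ⟨rfl, fun w hw _ => ?_⟩
  have hwq : (w ⬝ᵥ q) ^ 2 ≤ (w ⬝ᵥ A *ᵥ wstar) ^ 2 := by
    rw [hAw]
    exact pow_le_pow_left₀ (dotProduct_nonneg_of_nonneg hw hq)
      (dotProduct_le_dotProduct_of_nonneg_left hvs hw) 2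
  exact div_le_of_le_mul₀ (hA.posSemidef.dotProduct_mulVec_nonneg w)
    (hA.posSemidef.dotProduct_mulVec_nonneg wstar)
    (hwq.trans ((hA.posSemidef.sq_dotProduct_mulVec_le w wstar).trans_eq (mul_comm _ _)))

theorem saddle_point_sup_attained (n : ℕ) (A : Matrix (Fin n) (Fin n) ℝ)
    (hA : A.PosDef) (q : Fin n → ℝ) (hq : 0 ≤ q) (hq0 : q ≠ 0)
    (vstar : Fin n → ℝ) (hvs : q ≤ vstar)
    (hmin : IsMinOn (fun v : Fin n → ℝ => v ⬝ᵥ A⁻¹.mulVec v) {v | q ≤ v} vstar)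
    (wstar : Fin n → ℝ) (hws : wstar = A⁻¹.mulVec vstar) :
    (wstar ⬝ᵥ q) ^ 2 / (wstar ⬝ᵥ A.mulVec wstar) = vstar ⬝ᵥ A⁻¹.mulVec vstar ∧
    (∀ w : Fin n → ℝ, 0 ≤ w → w ≠ 0 →
      (w ⬝ᵥ q) ^ 2 / (w ⬝ᵥ A.mulVec w) ≤ (wstar ⬝ᵥ q) ^ 2 / (wstar ⬝ᵥ A.mulVec wstar)) :=
  saddle_point_sup_attained_general n A hA q hq vstar hvs hmin wstar hws
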